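/- arXiv:1710.09783 — 2 statements merged into one kernel-verified Lean document; each statement's English description precedes it below -/
import Mathlib

section
/- Let A : [0,∞) → [0,∞) be a càdlàg function, λ > 0, and W > 0 such that e^{-λt} A(t) → W as t → ∞. Define τ_n = inf{t ≥ 0 : A(t) ≥ n}. Then τ_n < ∞ for all n, τ_n → ∞, and A(τ_n)/n → 1 as n → ∞. -/
open Filter Set Topology

/-!
Write `A t = f t * exp (λ t)` with `f t → W > 0`. Then `A → ∞`, so every level is reached, and
since a càdlàg function is bounded on compact intervals, `τ n → ∞`. At the hitting time,
right-continuity gives `n ≤ A (τ n)`, while `A < n` on `[0, τ n)` together with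
`(W - ε) exp (λ t) ≤ A t` for large `t` gives `(W - ε) exp (λ τ n) ≤ n`. Hence
`n exp (-λ τ n) → W`, and `A (τ n) / n = f (τ n) / (n exp (-λ τ n)) → W / W = 1`.
-/

theorem IsCompact.bddAbove_image_of_forall_exists_eventually_le {X α : Type*}
    [TopologicalSpace X] [SemilatticeSup α] [Nonempty α] {f : X → α} {K : Set X}
    (hK : IsCompact K) (h : ∀ x ∈ K, ∃ C, ∀ᶠ y in 𝓝[K] x, f y ≤ C) : BddAbove (f '' K) := by
  refine hK.induction_on (p := fun s => BddAbove (f '' s)) (by simp)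
    (fun s t hst ht => ht.mono (image_mono hst))
    (fun s t hs ht => by rw [image_union]; exact hs.union ht) fun x hx => ?_
  obtain ⟨C, hC⟩ := h x hx
  exact ⟨{y | f y ≤ C}, hC, C, by rintro _ ⟨y, hy, rfl⟩; exact hy⟩

theorem exists_eventually_nhdsGE_le {A : ℝ → ℝ} {x : ℝ}
    (hrc : ContinuousWithinAt A (Ici x) x) : ∃ C, ∀ᶠ y in 𝓝[≥] x, A y ≤ C :=
  ⟨A x + 1, (hrc.eventually_lt_const (lt_add_one _)).mono fun _ hy => hy.le⟩

theorem exists_eventually_nhds_le {A : ℝ → ℝ} {x : ℝ}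
    (hrc : ContinuousWithinAt A (Ici x) x) (hll : ∃ l, Tendsto A (𝓝[<] x) (𝓝 l)) :
    ∃ C, ∀ᶠ y in 𝓝 x, A y ≤ C := by
  obtain ⟨l, hl⟩ := hll
  obtain ⟨C, hC⟩ := exists_eventually_nhdsGE_le hrc
  refine ⟨max l C + 1, ?_⟩
  rw [← nhdsLT_sup_nhdsGE, eventually_sup]
  exact ⟨(hl.eventually_lt_const (by linarith [le_max_left l C])).mono fun _ hy => hy.le,
    hC.mono fun _ hy => by linarith [le_max_right l C]⟩

theorem bddAbove_image_Icc_of_cadlag {A : ℝ → ℝ} {a b : ℝ}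
    (hrc : ∀ t ∈ Icc a b, ContinuousWithinAt A (Ici t) t)
    (hll : ∀ t ∈ Ioc a b, ∃ l, Tendsto A (𝓝[<] t) (𝓝 l)) : BddAbove (A '' Icc a b) := by
  refine isCompact_Icc.bddAbove_image_of_forall_exists_eventually_le fun x hx => ?_
  rcases hx.1.eq_or_lt with rfl | hax
  · obtain ⟨C, hC⟩ := exists_eventually_nhdsGE_le (hrc _ hx)
    exact ⟨C, hC.filter_mono (nhdsWithin_mono _ Icc_subset_Ici_self)⟩
  · obtain ⟨C, hC⟩ := exists_eventually_nhds_le (hrc x hx) (hll x ⟨hax, hx.2⟩)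
    exact ⟨C, hC.filter_mono nhdsWithin_le_nhds⟩

/-- Junk value: `sInf ∅ = 0`, so this is `0` when the level `c` is never reached. -/
noncomputable def firstPassage (A : ℝ → ℝ) (c : ℝ) : ℝ :=
  sInf {t | 0 ≤ t ∧ c ≤ A t}

namespace firstPassage

variable {A : ℝ → ℝ} {c : ℝ}

theorem bddBelow_set : BddBelow {t | 0 ≤ t ∧ c ≤ A t} :=
  ⟨0, fun _ ht => ht.1⟩

theorem le_of_mem {t : ℝ} (ht0 : 0 ≤ t) (ht : c ≤ A t) : firstPassage A c ≤ t :=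
  csInf_le bddBelow_set ⟨ht0, ht⟩

theorem set_nonempty_of_tendsto_atTop (hA : Tendsto A atTop atTop) :
    {t | 0 ≤ t ∧ c ≤ A t}.Nonempty :=
  ((eventually_ge_atTop 0).and (hA.eventually_ge_atTop c)).exists

theorem nonneg (hne : {t | 0 ≤ t ∧ c ≤ A t}.Nonempty) : 0 ≤ firstPassage A c :=
  le_csInf hne fun _ ht => ht.1

theorem apply_lt_of_lt {t : ℝ} (ht0 : 0 ≤ t) (ht : t < firstPassage A c) : A t < c :=
  lt_of_not_ge fun hc => (le_of_mem ht0 hc).not_gt ht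

theorem le_of_forall_apply_lt {M : ℝ} (hne : {t | 0 ≤ t ∧ c ≤ A t}.Nonempty)
    (hM : ∀ t ∈ Ico 0 M, A t < c) : M ≤ firstPassage A c :=
  le_csInf hne fun t ht => le_of_not_gt fun htM => (hM t ⟨ht.1, htM⟩).not_ge ht.2

theorem le_apply (hne : {t | 0 ≤ t ∧ c ≤ A t}.Nonempty)
    (hrc : ContinuousWithinAt A (Ici (firstPassage A c)) (firstPassage A c)) :
    c ≤ A (firstPassage A c) := by
  have : (𝓝[{t | 0 ≤ t ∧ c ≤ A t}] firstPassage A c).NeBot :=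
    mem_closure_iff_nhdsWithin_neBot.mp (csInf_mem_closure hne bddBelow_set)
  have hsub : {t | 0 ≤ t ∧ c ≤ A t} ⊆ Ici (firstPassage A c) := fun _ ht => le_of_mem ht.1 ht.2
  exact ge_of_tendsto (hrc.mono_left (nhdsWithin_mono _ hsub))
    (eventually_nhdsWithin_of_forall fun _ ht => ht.2)

theorem le_of_le_on_Ioo {g : ℝ → ℝ} {T : ℝ} (hT : 0 ≤ T) (hTτ : T < firstPassage A c)
    (hg : ContinuousWithinAt g (Iio (firstPassage A c)) (firstPassage A c))
    (hgA : ∀ t ∈ Ioo T (firstPassage A c), g t ≤ A t) : g (firstPassage A c) ≤ c := by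
  refine le_of_tendsto hg ?_
  filter_upwards [Ioo_mem_nhdsLT hTτ] with t ht
  exact (hgA t ht).trans (apply_lt_of_lt (hT.trans ht.1.le) ht.2).le

theorem tendsto_atTop (hne : ∀ n : ℕ, {t | 0 ≤ t ∧ (n : ℝ) ≤ A t}.Nonempty)
    (hbdd : ∀ M, BddAbove (A '' Icc 0 M)) :
    Tendsto (fun n : ℕ => firstPassage A n) atTop atTop := by
  refine Filter.tendsto_atTop.2 fun M => ?_
  obtain ⟨C, hC⟩ := hbdd M
  obtain ⟨N, hN⟩ := exists_nat_gt C
  filter_upwards [eventually_ge_atTop N] with n hn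
  refine le_of_forall_apply_lt (hne n) fun t ht => ?_
  calc A t ≤ C := hC ⟨t, Ico_subset_Icc_self ht, rfl⟩
    _ < N := hN
    _ ≤ n := Nat.cast_le.mpr hn

end firstPassage

section ExponentialGrowth

variable {A : ℝ → ℝ} {lam W : ℝ}

theorem le_exp_neg_mul_mul_iff {b x t : ℝ} :
    b ≤ Real.exp (-lam * t) * x ↔ b * Real.exp (lam * t) ≤ x := by
  rw [neg_mul, Real.exp_neg, inv_mul_eq_div, le_div_iff₀ (Real.exp_pos _)]

theorem tendsto_atTop_of_tendsto_exp_neg_mul (hlam : 0 < lam) (hW : 0 < W)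
    (hlim : Tendsto (fun t => Real.exp (-lam * t) * A t) atTop (𝓝 W)) :
    Tendsto A atTop atTop := by
  have hexp : Tendsto (fun t => Real.exp (lam * t)) atTop atTop :=
    Real.tendsto_exp_atTop.comp (tendsto_id.const_mul_atTop hlam)
  refine (hlim.pos_mul_atTop hW hexp).congr fun t => ?_
  rw [mul_right_comm, ← Real.exp_add]
  simp

theorem tendsto_mul_exp_neg_mul_firstPassage
    (hlim : Tendsto (fun t => Real.exp (-lam * t) * A t) atTop (𝓝 W))
    (hτ : Tendsto (fun n : ℕ => firstPassage A n) atTop atTop)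
    (hle : ∀ n : ℕ, (n : ℝ) ≤ A (firstPassage A n)) :
    Tendsto (fun n : ℕ => n * Real.exp (-lam * firstPassage A n)) atTop (𝓝 W) := by
  refine tendsto_order.2 ⟨fun a ha => ?_, fun a ha => ?_⟩
  · obtain ⟨b, hab, hbW⟩ := exists_between ha
    obtain ⟨T, hT⟩ := eventually_atTop.1 (hlim.eventually_const_le hbW)
    filter_upwards [hτ.eventually_gt_atTop (max T 0)] with n hn
    have hexp : b * Real.exp (lam * firstPassage A n) ≤ n :=
      firstPassage.le_of_le_on_Ioo (le_max_right T 0) hn (by fun_prop) fun t ht =>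
        le_exp_neg_mul_mul_iff.1 (hT t ((le_max_left T 0).trans ht.1.le))
    rw [mul_comm]
    exact hab.trans_le (le_exp_neg_mul_mul_iff.2 hexp)
  · filter_upwards [(hlim.comp hτ).eventually_lt_const ha] with n hn
    rw [mul_comm]
    exact (mul_le_mul_of_nonneg_left (hle n) (Real.exp_pos _).le).trans_lt hn

end ExponentialGrowth

theorem stmt_2_general (A : ℝ → ℝ) (lam W : ℝ) (hlam : 0 < lam) (hW : 0 < W)
    (hrc : ∀ t, 0 ≤ t → ContinuousWithinAt A (Ici t) t)
    (hll : ∀ t, 0 < t → ∃ l, Tendsto A (nhdsWithin t (Iio t)) (nhds l))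
    (hlim : Tendsto (fun t => Real.exp (-lam * t) * A t) atTop (nhds W))
    (τ : ℕ → ℝ) (hτ : ∀ n, τ n = sInf {t | 0 ≤ t ∧ (n : ℝ) ≤ A t}) :
    (∀ n : ℕ, {t | 0 ≤ t ∧ (n : ℝ) ≤ A t}.Nonempty) ∧
      Tendsto τ atTop atTop ∧
      Tendsto (fun n : ℕ => A (τ n) / n) atTop (nhds 1) := by
  obtain rfl : τ = fun n : ℕ => firstPassage A n := funext hτ
  have hne : ∀ n : ℕ, {t | 0 ≤ t ∧ (n : ℝ) ≤ A t}.Nonempty := fun _ =>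
    firstPassage.set_nonempty_of_tendsto_atTop (tendsto_atTop_of_tendsto_exp_neg_mul hlam hW hlim)
  have htop := firstPassage.tendsto_atTop hne fun M =>
    bddAbove_image_Icc_of_cadlag (fun t ht => hrc t ht.1) fun t ht => hll t ht.1
  have hle : ∀ n : ℕ, (n : ℝ) ≤ A (firstPassage A n) := fun n =>
    firstPassage.le_apply (hne n) (hrc _ (firstPassage.nonneg (hne n)))
  refine ⟨hne, htop, ?_⟩
  have hratio := (hlim.comp htop).div
    (tendsto_mul_exp_neg_mul_firstPassage hlim htop hle) hW.ne'
  rw [div_self hW.ne'] at hratio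
  refine hratio.congr fun n => ?_
  simp only [Pi.div_apply, Function.comp_apply]
  rw [mul_comm _ (Real.exp _), mul_div_mul_left _ _ (Real.exp_pos _).ne']

/-- First-passage times of a càdlàg function growing like `W e^{λ t}` with `W > 0`:
every level `n` is reached (`τ_n < ∞`), `τ_n → ∞`, and `A(τ_n)/n → 1`. -/
theorem stmt_2 (A : ℝ → ℝ) (lam W : ℝ) (hlam : 0 < lam) (hW : 0 < W)
    (hnonneg : ∀ t, 0 ≤ t → 0 ≤ A t)
    (hrc : ∀ t, 0 ≤ t → ContinuousWithinAt A (Ici t) t)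
    (hll : ∀ t, 0 < t → ∃ l, Tendsto A (nhdsWithin t (Iio t)) (nhds l))
    (hlim : Tendsto (fun t => Real.exp (-lam * t) * A t) atTop (nhds W))
    (τ : ℕ → ℝ) (hτ : ∀ n, τ n = sInf {t | 0 ≤ t ∧ (n : ℝ) ≤ A t}) :
    (∀ n : ℕ, {t | 0 ≤ t ∧ (n : ℝ) ≤ A t}.Nonempty) ∧
      Tendsto τ atTop atTop ∧
      Tendsto (fun n : ℕ => A (τ n) / n) atTop (nhds 1) :=
  stmt_2_general A lam W hlam hW hrc hll hlim τ hτ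
end

section
/- Let r(z) be a probability generating function of a ℤ_{≥0}-valued random variable with P(Y = k) ~ c·k^{-1-γ} as k → ∞ for constants c > 0 and γ ∈ (0,∞). Then the compound Poisson random variable B* with generating function exp(m(r(z)-1)), m > 0, satisfies lim_{k→∞} k^{1+γ} P(B* = k) = m·c. -/
open MeasureTheory ProbabilityTheory Filter

open Finset Topology Real
open scoped Nat

/-!
Conditioning on `K` writes `P(B* = k)` as the Poisson mixture `∑ⱼ e^{-m} mʲ / j! · p^{*j}(k)` of
the convolution powers of `p = P(Y = ·)`. One big jump: if `kᵅ p(k) → c` then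
`kᵅ p^{*j}(k) → j c`, since in `p^{*(j+1)}(k) = ∑ₗ p^{*j}(l) p(k - l)` one of the two indices
is at least `k / 2`; that factor carries the tail while the other one is summed (dominated
convergence on each half of the range). The crude bound `kᵅ p^{*j}(k) ≤ C (2 · 2ᵅ)ʲ`, coming from
`(x + y)ᵅ ≤ 2ᵅ (xᵅ + yᵅ)`, is summable against the Poisson weights, so dominated convergence in
`j` gives the limit `∑ⱼ e^{-m} mʲ / j! · j c = m c`.
-/

noncomputable def natConv (a b : ℕ → ℝ) (k : ℕ) : ℝ :=
  ∑ l ∈ range (k + 1), a l * b (k - l)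

noncomputable def natConvPow (p : ℕ → ℝ) : ℕ → ℕ → ℝ
  | 0 => fun k => if k = 0 then 1 else 0
  | j + 1 => natConv (natConvPow p j) p

section Convolution

variable {a b p : ℕ → ℝ}

lemma natConv_nonneg (ha : ∀ k, 0 ≤ a k) (hb : ∀ k, 0 ≤ b k) (k : ℕ) : 0 ≤ natConv a b k :=
  sum_nonneg fun l _ => mul_nonneg (ha l) (hb (k - l))

lemma HasSum.natConv {A B : ℝ} (ha0 : ∀ k, 0 ≤ a k) (hb0 : ∀ k, 0 ≤ b k) (ha : HasSum a A)
    (hb : HasSum b B) : HasSum (natConv a b) (A * B) := by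
  have h := hasSum_sum_range_mul_of_summable_norm
    (ha.summable.congr fun k => (norm_of_nonneg (ha0 k)).symm)
    (hb.summable.congr fun k => (norm_of_nonneg (hb0 k)).symm)
  rwa [ha.tsum_eq, hb.tsum_eq] at h

lemma natConvPow_nonneg (hp : ∀ k, 0 ≤ p k) : ∀ j k, 0 ≤ natConvPow p j k
  | 0, k => by dsimp only [natConvPow]; split_ifs <;> norm_num
  | j + 1, k => natConv_nonneg (natConvPow_nonneg hp j) hp k

lemma hasSum_natConvPow (hp0 : ∀ k, 0 ≤ p k) (hp : HasSum p 1) :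
    ∀ j, HasSum (natConvPow p j) 1
  | 0 => hasSum_ite_eq 0 1
  | j + 1 => by
    have h := (hasSum_natConvPow hp0 hp j).natConv (natConvPow_nonneg hp0 j) hp0 hp
    rwa [one_mul] at h

lemma sum_range_comp_sub_le_tsum (hb0 : ∀ k, 0 ≤ b k) (hb : Summable b) (k : ℕ) :
    ∑ l ∈ range (k + 1), b (k - l) ≤ ∑' l, b l := by
  have h := sum_range_reflect b (k + 1)
  simp only [add_tsub_cancel_right] at h
  rw [h]
  exact hb.sum_le_tsum _ (fun l _ => hb0 l)

end Convolution

lemma add_rpow_le_two_rpow_mul_add {x y α : ℝ} (hx : 0 ≤ x) (hy : 0 ≤ y) (hα : 0 ≤ α) :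
    (x + y) ^ α ≤ 2 ^ α * (x ^ α + y ^ α) :=
  calc (x + y) ^ α ≤ (2 * max x y) ^ α :=
        rpow_le_rpow (by positivity) (by linarith [le_max_left x y, le_max_right x y]) hα
    _ = 2 ^ α * max (x ^ α) (y ^ α) := by
        rw [mul_rpow zero_le_two (le_max_of_le_left hx), rpow_max hx hy hα]
    _ ≤ 2 ^ α * (x ^ α + y ^ α) := by
        gcongr
        exact max_le (le_add_of_nonneg_right (rpow_nonneg hy α))
          (le_add_of_nonneg_left (rpow_nonneg hx α))

section PowerTail

variable {α : ℝ} {a b p : ℕ → ℝ}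

lemma rpow_mul_natConv_le (hα : 0 ≤ α) (ha0 : ∀ k, 0 ≤ a k) (hb0 : ∀ k, 0 ≤ b k)
    (ha : Summable a) (hb : Summable b) {Ca Cb : ℝ} (hCa : ∀ k : ℕ, (k : ℝ) ^ α * a k ≤ Ca)
    (hCb : ∀ k : ℕ, (k : ℝ) ^ α * b k ≤ Cb) (k : ℕ) :
    (k : ℝ) ^ α * natConv a b k ≤ 2 ^ α * (Ca * ∑' l, b l + Cb * ∑' l, a l) := by
  have hCa0 : 0 ≤ Ca := (mul_nonneg (by positivity) (ha0 0)).trans (hCa 0)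
  have hCb0 : 0 ≤ Cb := (mul_nonneg (by positivity) (hb0 0)).trans (hCb 0)
  have hterm : ∀ l ∈ range (k + 1), (k : ℝ) ^ α * (a l * b (k - l))
      ≤ 2 ^ α * (Ca * b (k - l) + Cb * a l) := by
    intro l hl
    have hk : (k : ℝ) = l + ((k - l : ℕ) : ℝ) := by
      rw [Nat.cast_sub (Nat.le_of_lt_succ (mem_range.1 hl))]; ring
    calc (k : ℝ) ^ α * (a l * b (k - l))
        ≤ 2 ^ α * ((l : ℝ) ^ α + ((k - l : ℕ) : ℝ) ^ α) * (a l * b (k - l)) := by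
          rw [hk]
          gcongr
          · exact mul_nonneg (ha0 l) (hb0 _)
          · exact add_rpow_le_two_rpow_mul_add (by positivity) (by positivity) hα
      _ = 2 ^ α * (((l : ℝ) ^ α * a l) * b (k - l) + (((k - l : ℕ) : ℝ) ^ α * b (k - l)) * a l) := by
          ring
      _ ≤ 2 ^ α * (Ca * b (k - l) + Cb * a l) := by
          gcongr
          exacts [hb0 _, hCa l, ha0 l, hCb _]
  calc (k : ℝ) ^ α * natConv a b k
      ≤ ∑ l ∈ range (k + 1), 2 ^ α * (Ca * b (k - l) + Cb * a l) := by
        rw [natConv, mul_sum]; exact sum_le_sum hterm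
    _ = 2 ^ α * (Ca * ∑ l ∈ range (k + 1), b (k - l) + Cb * ∑ l ∈ range (k + 1), a l) := by
        rw [← mul_sum, sum_add_distrib, ← mul_sum, ← mul_sum]
    _ ≤ 2 ^ α * (Ca * ∑' l, b l + Cb * ∑' l, a l) := by
        gcongr
        · exact sum_range_comp_sub_le_tsum hb0 hb k
        · exact ha.sum_le_tsum _ (fun l _ => ha0 l)

lemma rpow_mul_natConvPow_le (hα : 0 < α) (hp0 : ∀ k, 0 ≤ p k) (hp : HasSum p 1) {C : ℝ}
    (hC : ∀ k : ℕ, (k : ℝ) ^ α * p k ≤ C) :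
    ∀ j (k : ℕ), (k : ℝ) ^ α * natConvPow p j k ≤ C * (2 * 2 ^ α) ^ j := by
  have hC0 : 0 ≤ C := (mul_nonneg (by positivity) (hp0 0)).trans (hC 0)
  intro j
  induction j with
  | zero =>
    intro k
    rcases eq_or_ne k 0 with rfl | hk
    · simp [zero_rpow hα.ne', hC0]
    · simp [natConvPow, hk, hC0]
  | succ j ih =>
    intro k
    have hR : 1 ≤ (2 * 2 ^ α : ℝ) ^ j := one_le_pow₀ (by nlinarith [one_le_rpow one_le_two hα.le])
    calc (k : ℝ) ^ α * natConvPow p (j + 1) k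
        ≤ 2 ^ α * (C * (2 * 2 ^ α) ^ j * ∑' l, p l + C * ∑' l, natConvPow p j l) :=
          rpow_mul_natConv_le hα.le (natConvPow_nonneg hp0 j) hp0
            (hasSum_natConvPow hp0 hp j).summable hp.summable ih hC k
      _ = 2 ^ α * (C * (2 * 2 ^ α) ^ j + C) := by
          rw [hp.tsum_eq, (hasSum_natConvPow hp0 hp j).tsum_eq, mul_one, mul_one]
      _ ≤ C * (2 * 2 ^ α) ^ (j + 1) := by
          rw [pow_succ]
          nlinarith [mul_le_mul_of_nonneg_left hR hC0, rpow_pos_of_pos two_pos α]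

lemma tendsto_rpow_mul_comp_sub {A : ℝ} {u : ℕ → ℝ}
    (hu : Tendsto (fun k : ℕ => (k : ℝ) ^ α * u k) atTop (𝓝 A)) (l : ℕ) :
    Tendsto (fun k : ℕ => (k : ℝ) ^ α * u (k - l)) atTop (𝓝 A) := by
  rw [← tendsto_add_atTop_iff_nat l]
  have hratio : Tendsto (fun n : ℕ => (1 + (l : ℝ) / n) ^ α) atTop (𝓝 1) := by
    simpa using ((tendsto_const_div_atTop_nhds_zero_nat (l : ℝ)).const_add 1).rpow_const
      (by norm_num)
  have h := hratio.mul hu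
  rw [one_mul] at h
  refine h.congr' ?_
  filter_upwards [eventually_gt_atTop 0] with n hn
  rw [Nat.add_sub_cancel, ← mul_assoc, ← mul_rpow (by positivity) (by positivity)]
  congr 2
  field_simp
  push_cast
  ring


lemma tendsto_sum_mul_rpow_mul_comp_sub (hα : 0 ≤ α) {w u : ℕ → ℝ} {A : ℝ}
    (hw0 : ∀ l, 0 ≤ w l) (hw : Summable w) (hu0 : ∀ k, 0 ≤ u k)
    (hu : Tendsto (fun k : ℕ => (k : ℝ) ^ α * u k) atTop (𝓝 A)) {S : ℕ → Finset ℕ}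
    (hS : ∀ k, ∀ l ∈ S k, 2 * l ≤ k) (hS_eventually : ∀ l, ∀ᶠ k in atTop, l ∈ S k) :
    Tendsto (fun k : ℕ => ∑ l ∈ S k, w l * ((k : ℝ) ^ α * u (k - l))) atTop
      (𝓝 (A * ∑' l, w l)) := by
  obtain ⟨C, hC⟩ := hu.bddAbove_range
  have hC' : ∀ k : ℕ, (k : ℝ) ^ α * u k ≤ C := fun k => hC ⟨k, rfl⟩
  have hC0 : 0 ≤ C := (mul_nonneg (by positivity) (hu0 0)).trans (hC' 0)
  have hbound : ∀ k, ∀ l ∈ S k, (k : ℝ) ^ α * u (k - l) ≤ 2 ^ α * C := by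
    intro k l hl
    have hk : (k : ℝ) ≤ 2 * ((k - l : ℕ) : ℝ) := by
      have := hS k l hl
      exact_mod_cast (by omega : k ≤ 2 * (k - l))
    calc (k : ℝ) ^ α * u (k - l) ≤ (2 * ((k - l : ℕ) : ℝ)) ^ α * u (k - l) := by
          gcongr; exact hu0 _
      _ = 2 ^ α * (((k - l : ℕ) : ℝ) ^ α * u (k - l)) := by
          rw [mul_rpow zero_le_two (Nat.cast_nonneg _), mul_assoc]
      _ ≤ 2 ^ α * C := by gcongr; exact hC' _
  have hsum : ∀ k : ℕ, ∑ l ∈ S k, w l * ((k : ℝ) ^ α * u (k - l))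
      = ∑' l, (S k : Set ℕ).indicator (fun l => w l * ((k : ℝ) ^ α * u (k - l))) l :=
    fun k => sum_eq_tsum_indicator _ _
  simp only [hsum]
  rw [mul_comm, ← tsum_mul_right]
  refine tendsto_tsum_of_dominated_convergence (hw.mul_right (2 ^ α * C)) (fun l => ?_)
    (Eventually.of_forall fun k l => ?_)
  · refine ((tendsto_rpow_mul_comp_sub hu l).const_mul (w l)).congr' ?_
    filter_upwards [hS_eventually l] with k hk
    rw [Set.indicator_of_mem (mem_coe.2 hk)]
  · by_cases hl : l ∈ S k
    · rw [Set.indicator_of_mem (mem_coe.2 hl), norm_of_nonneg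
        (mul_nonneg (hw0 l) (mul_nonneg (by positivity) (hu0 _)))]
      exact mul_le_mul_of_nonneg_left (hbound k l hl) (hw0 l)
    · rw [Set.indicator_of_notMem (by simpa using hl), norm_zero]
      exact mul_nonneg (hw0 l) (by positivity)

lemma natConv_eq_sum_filter_add_sum_filter (a b : ℕ → ℝ) (k : ℕ) :
    natConv a b k = ∑ l ∈ (range (k + 1)).filter (fun l => 2 * l ≤ k), a l * b (k - l)
      + ∑ l ∈ (range (k + 1)).filter (fun l => 2 * l < k), b l * a (k - l) := by
  rw [natConv, ← sum_filter_add_sum_filter_not _ (fun l => 2 * l ≤ k)]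
  congr 1
  refine sum_nbij' (k - ·) (k - ·) ?_ ?_ ?_ ?_ ?_ <;> intro l hl <;>
    simp only [mem_filter, mem_range] at hl ⊢
  · omega
  · omega
  · omega
  · omega
  · rw [Nat.sub_sub_self (by omega), mul_comm]

lemma tendsto_rpow_mul_natConv (hα : 0 ≤ α) (ha0 : ∀ k, 0 ≤ a k) (hb0 : ∀ k, 0 ≤ b k)
    (ha : Summable a) (hb : Summable b) {A B : ℝ}
    (hA : Tendsto (fun k : ℕ => (k : ℝ) ^ α * a k) atTop (𝓝 A))
    (hB : Tendsto (fun k : ℕ => (k : ℝ) ^ α * b k) atTop (𝓝 B)) :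
    Tendsto (fun k : ℕ => (k : ℝ) ^ α * natConv a b k) atTop
      (𝓝 (B * ∑' l, a l + A * ∑' l, b l)) := by
  have hsmall := tendsto_sum_mul_rpow_mul_comp_sub hα ha0 ha hb0 hB
    (S := fun k => (range (k + 1)).filter (fun l => 2 * l ≤ k))
    (by simp only [mem_filter]; tauto) (fun l => by
      filter_upwards [eventually_ge_atTop (2 * l)] with k hk
      simp only [mem_filter, mem_range]; omega)
  have hlarge := tendsto_sum_mul_rpow_mul_comp_sub hα hb0 hb ha0 hA
    (S := fun k => (range (k + 1)).filter (fun l => 2 * l < k))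
    (by simp only [mem_filter]; omega) (fun l => by
      filter_upwards [eventually_gt_atTop (2 * l)] with k hk
      simp only [mem_filter, mem_range]; omega)
  refine (hsmall.add hlarge).congr fun k => ?_
  rw [natConv_eq_sum_filter_add_sum_filter, mul_add, mul_sum, mul_sum]
  congr 1 <;> exact sum_congr rfl fun l _ => by ring

lemma tendsto_rpow_mul_natConvPow (hα : 0 < α) (hp0 : ∀ k, 0 ≤ p k) (hp : HasSum p 1)
    {c : ℝ} (hc : Tendsto (fun k : ℕ => (k : ℝ) ^ α * p k) atTop (𝓝 c)) (j : ℕ) :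
    Tendsto (fun k : ℕ => (k : ℝ) ^ α * natConvPow p j k) atTop (𝓝 (j * c)) := by
  induction j with
  | zero =>
    refine tendsto_const_nhds.congr' ?_
    filter_upwards [eventually_ne_atTop 0] with k hk
    simp [natConvPow, hk]
  | succ j ih =>
    have h := tendsto_rpow_mul_natConv hα.le (natConvPow_nonneg hp0 j) hp0
      (hasSum_natConvPow hp0 hp j).summable hp.summable ih hc
    rw [(hasSum_natConvPow hp0 hp j).tsum_eq, hp.tsum_eq] at h
    convert h using 2
    · rfl
    · push_cast
      ring

end PowerTail

lemma hasSum_poisson_mul_self (m : ℝ) :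
    HasSum (fun j : ℕ => exp (-m) * m ^ j / j ! * j) m := by
  have hexp : HasSum (fun j : ℕ => m ^ j / j !) (exp m) := by
    rw [exp_eq_exp_ℝ]; exact NormedSpace.expSeries_div_hasSum_exp m
  have h := hexp.mul_left (exp (-m) * m)
  rw [mul_right_comm, ← exp_add, neg_add_cancel, exp_zero, one_mul] at h
  refine (hasSum_nat_add_iff' 1).mp ?_
  simp only [range_one, sum_singleton, CharP.cast_eq_zero, mul_zero, sub_zero]
  have hshift : (fun j : ℕ => exp (-m) * m * (m ^ j / j !))
      = fun j : ℕ => exp (-m) * m ^ (j + 1) / (j + 1)! * ((j + 1 : ℕ) : ℝ) := by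
    funext j
    rw [Nat.factorial_succ]
    push_cast
    field_simp
    ring
  rwa [hshift] at h

lemma tendsto_tsum_poisson_mul_rpow_mul_natConvPow {α m c : ℝ} {p : ℕ → ℝ} (hα : 0 < α)
    (hm : 0 ≤ m) (hp0 : ∀ k, 0 ≤ p k) (hp : HasSum p 1)
    (hc : Tendsto (fun k : ℕ => (k : ℝ) ^ α * p k) atTop (𝓝 c)) :
    Tendsto (fun k : ℕ => ∑' j, exp (-m) * m ^ j / j ! * ((k : ℝ) ^ α * natConvPow p j k))
      atTop (𝓝 (m * c)) := by
  obtain ⟨C, hC⟩ := hc.bddAbove_range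
  have hC' : ∀ k : ℕ, (k : ℝ) ^ α * p k ≤ C := fun k => hC ⟨k, rfl⟩
  rw [← ((hasSum_poisson_mul_self m).mul_right c).tsum_eq]
  refine tendsto_tsum_of_dominated_convergence
    (bound := fun j => exp (-m) * m ^ j / j ! * (C * (2 * 2 ^ α) ^ j)) ?_ (fun j => ?_)
    (Eventually.of_forall fun k j => ?_)
  · refine ((summable_pow_div_factorial (m * (2 * 2 ^ α))).mul_left (exp (-m) * C)).congr
      fun j => ?_
    rw [mul_pow]
    ring
  · simpa only [mul_assoc] using (tendsto_rpow_mul_natConvPow hα hp0 hp hc j).const_mul _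
  · rw [norm_of_nonneg (mul_nonneg (by positivity)
      (mul_nonneg (by positivity) (natConvPow_nonneg hp0 j k)))]
    exact mul_le_mul_of_nonneg_left (rpow_mul_natConvPow_le hα hp0 hp hC' j k) (by positivity)

section Probability

variable {Ω : Type*} [MeasurableSpace Ω] {P : Measure Ω}

lemma hasSum_measureReal_iUnion {ι : Type*} [Countable ι] [IsFiniteMeasure P] {s : ι → Set Ω}
    (hs : ∀ i, MeasurableSet (s i)) (hd : Pairwise (Function.onFun Disjoint s)) :
    HasSum (fun i => P.real (s i)) (P.real (⋃ i, s i)) := by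
  have h := measure_iUnion (μ := P) hd hs
  rw [measureReal_def, h, ENNReal.tsum_toReal_eq fun i => measure_ne_top P _]
  exact ENNReal.hasSum_toReal (h ▸ measure_ne_top P _)

lemma hasSum_measureReal_setOf_eq [IsProbabilityMeasure P] {β : Type*} [Countable β]
    [MeasurableSpace β] [MeasurableSingletonClass β] {X : Ω → β} (hX : Measurable X) :
    HasSum (fun b => P.real {ω | X ω = b}) 1 := by
  have h := hasSum_measureReal_iUnion (P := P) (fun b => hX (measurableSet_singleton b))
    fun a b hab => Set.disjoint_left.2 fun ω (ha : X ω = a) (hb : X ω = b) => hab (ha ▸ hb)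
  rwa [Set.iUnion_eq_univ_iff.2 fun ω => ⟨X ω, rfl⟩, probReal_univ] at h

lemma measureReal_add_eq_natConv [IsFiniteMeasure P] {X Z : Ω → ℕ} (hX : Measurable X)
    (hZ : Measurable Z) (hXZ : IndepFun X Z P) (k : ℕ) :
    P.real {ω | X ω + Z ω = k}
      = natConv (fun l => P.real {ω | X ω = l}) (fun l => P.real {ω | Z ω = l}) k := by
  have hset : {ω | X ω + Z ω = k} = ⋃ l ∈ range (k + 1), X ⁻¹' {l} ∩ Z ⁻¹' {k - l} := by
    ext ω
    simp only [Set.mem_ofPred_eq, Set.mem_iUnion, Set.mem_inter_iff, Set.mem_preimage,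
      Set.mem_singleton_iff, mem_range, exists_prop]
    constructor
    · rintro rfl; exact ⟨X ω, by omega, rfl, by omega⟩
    · rintro ⟨l, hl, rfl, hZ⟩; omega
  rw [hset, measureReal_biUnion_finset _ fun l _ =>
    (hX (measurableSet_singleton l)).inter (hZ (measurableSet_singleton _))]
  · refine sum_congr rfl fun l _ => ?_
    rw [measureReal_def, hXZ.measure_inter_preimage_eq_mul _ _ (measurableSet_singleton l)
      (measurableSet_singleton (k - l)), ENNReal.toReal_mul]
    rfl
  · rintro a - b - hab
    exact Set.disjoint_left.2 fun ω ha hb => hab (ha.1.symm.trans hb.1)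

lemma measureReal_sum_range_eq_natConvPow [IsProbabilityMeasure P] {Y : ℕ → Ω → ℕ}
    (hY : ∀ i, Measurable (Y i)) (hind : iIndepFun Y P)
    (hid : ∀ i, Measure.map (Y i) P = Measure.map (Y 0) P) (j k : ℕ) :
    P.real {ω | ∑ i ∈ range j, Y i ω = k}
      = natConvPow (fun l => P.real {ω | Y 0 ω = l}) j k := by
  induction j generalizing k with
  | zero =>
    rcases eq_or_ne k 0 with rfl | hk
    · simp [natConvPow]
    · simp [natConvPow, hk, Ne.symm hk]
  | succ j ih =>
    have hlaw : ∀ l, P.real {ω | Y j ω = l} = P.real {ω | Y 0 ω = l} := fun l => by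
      change P.real (Y j ⁻¹' {l}) = P.real (Y 0 ⁻¹' {l})
      rw [← map_measureReal_apply (hY j) (measurableSet_singleton l), hid,
        map_measureReal_apply (hY 0) (measurableSet_singleton l)]
    have hind' := hind.indepFun_finsetSum_of_notMem hY (s := range j) (i := j) (by simp)
    rw [sum_fn] at hind'
    simp only [sum_range_succ]
    rw [measureReal_add_eq_natConv (measurable_sum _ fun i _ => hY i) (hY j) hind' k]
    simp only [ih, hlaw]
    rfl

lemma hasSum_measureReal_randomIndex [IsFiniteMeasure P] {β : Type*} [MeasurableSpace β]
    {K : Ω → ℕ} {S : ℕ → Ω → β} (hK : Measurable K) (hS : ∀ j, Measurable (S j))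
    (hind : ∀ j, IndepFun K (S j) P) {B : Set β} (hB : MeasurableSet B) :
    HasSum (fun j => P.real {ω | K ω = j} * P.real (S j ⁻¹' B)) (P.real {ω | S (K ω) ω ∈ B}) := by
  have h := hasSum_measureReal_iUnion (P := P) (s := fun j => K ⁻¹' {j} ∩ S j ⁻¹' B)
    (fun j => (hK (measurableSet_singleton j)).inter (hS j hB))
    fun a b hab => Set.disjoint_left.2 fun ω ha hb => hab (ha.1.symm.trans hb.1)
  have hunion : ⋃ j, K ⁻¹' {j} ∩ S j ⁻¹' B = {ω | S (K ω) ω ∈ B} := by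
    ext ω; simp
  rw [hunion] at h
  convert h using 2 with j
  change _ = (P (K ⁻¹' {j} ∩ S j ⁻¹' B)).toReal
  rw [(hind j).measure_inter_preimage_eq_mul _ _ (measurableSet_singleton j) hB,
    ENNReal.toReal_mul]
  rfl

end Probability

theorem stmt_11_general {Ω : Type*} [MeasurableSpace Ω] (P : Measure Ω) [IsProbabilityMeasure P]
    (m c γ : ℝ) (hm : 0 < m) (hγ : 0 < γ)
    (K : Ω → ℕ) (Y : ℕ → Ω → ℕ)
    (hKm : Measurable K) (hYm : ∀ i, Measurable (Y i))
    (hK : ∀ k : ℕ, (P {ω | K ω = k}).toReal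
      = Real.exp (-m) * m ^ k / (Nat.factorial k))
    (hYid : ∀ i, Measure.map (Y i) P = Measure.map (Y 0) P)
    (hIndep : iIndepFun
      (fun (o : Option ℕ) => o.elim K Y) P)
    (htail : Tendsto (fun k : ℕ => (k : ℝ) ^ (1 + γ) * (P {ω | Y 0 ω = k}).toReal)
      atTop (nhds c)) :
    Tendsto (fun k : ℕ =>
        (k : ℝ) ^ (1 + γ) * (P {ω | (∑ i ∈ Finset.range (K ω), Y i ω) = k}).toReal)
      atTop (nhds (m * c)) := by
  simp only [← measureReal_def] at hK htail ⊢
  have hKS : ∀ j, IndepFun K (fun ω => ∑ i ∈ range j, Y i ω) P := fun j => by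
    have h := hIndep.indepFun_finsetSum_of_notMem (s := (range j).map Function.Embedding.some)
      (i := none) (by rintro (_ | i); exacts [hKm, hYm i]) (by simp)
    simpa only [sum_map, sum_fn, Function.Embedding.some_apply, Option.elim_some,
      Option.elim_none] using h.symm
  have hcompound : ∀ k : ℕ, P.real {ω | ∑ i ∈ range (K ω), Y i ω = k}
      = ∑' j, exp (-m) * m ^ j / j ! * natConvPow (fun l => P.real {ω | Y 0 ω = l}) j k := by
    intro k
    refine (hasSum_measureReal_randomIndex hKm (fun j => measurable_sum _ fun i _ => hYm i)
      hKS (measurableSet_singleton k)).tsum_eq.symm.trans (tsum_congr fun j => ?_)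
    rw [hK, ← measureReal_sum_range_eq_natConvPow hYm
      (hIndep.precomp (g := some) (Option.some_injective ℕ)) hYid]
    rfl
  simp only [hcompound, ← tsum_mul_left]
  refine (tendsto_tsum_poisson_mul_rpow_mul_natConvPow (by linarith) hm.le
    (fun _ => measureReal_nonneg) (hasSum_measureReal_setOf_eq (hYm 0)) htail).congr
    fun k => tsum_congr fun j => by ring

/-- Power-law tail of a compound Poisson sum: if the i.i.d. ℤ≥0-valued `Y i` satisfy
`k^{1+γ} P(Y = k) → c` and `K ~ Poisson(m)` is independent of the `Y i`, then the
compound Poisson variable `B* = Σ_{i<K} Y i` satisfies `k^{1+γ} P(B* = k) → m c`. -/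
theorem stmt_11 {Ω : Type*} [MeasurableSpace Ω] (P : Measure Ω) [IsProbabilityMeasure P]
    (m c γ : ℝ) (hm : 0 < m) (hc : 0 < c) (hγ : 0 < γ)
    (K : Ω → ℕ) (Y : ℕ → Ω → ℕ)
    (hKm : Measurable K) (hYm : ∀ i, Measurable (Y i))
    (hK : ∀ k : ℕ, (P {ω | K ω = k}).toReal
      = Real.exp (-m) * m ^ k / (Nat.factorial k))
    (hYid : ∀ i, Measure.map (Y i) P = Measure.map (Y 0) P)
    (hIndep : iIndepFun
      (fun (o : Option ℕ) => o.elim K Y) P)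
    (htail : Tendsto (fun k : ℕ => (k : ℝ) ^ (1 + γ) * (P {ω | Y 0 ω = k}).toReal)
      atTop (nhds c)) :
    Tendsto (fun k : ℕ =>
        (k : ℝ) ^ (1 + γ) * (P {ω | (∑ i ∈ Finset.range (K ω), Y i ω) = k}).toReal)
      atTop (nhds (m * c)) :=
  stmt_11_general P m c γ hm hγ K Y hKm hYm hK hYid hIndep htail
end
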